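/- The generating function C(x) of Łukasiewicz paths with no flat step at positive height, in which every up step is immediately followed by a down step, satisfies C(x) = 1 + xC(x) + x²C(x)/(1 − x·C̄(x)), where C̄(x) = 1 + x Σ_{k ≥ 1} x^k C̄(x)^k counts such paths without any flat steps; explicitly C(x) = (1 − x + x² + √(1 − 2x − x² − 2x³ + x⁴)) / (1 − 2x − x³ + (1 − x)√(1 − 2x − x² − 2x³ + x⁴)). -/

import Mathlib

/-!
A nonempty path starts either with a flat step (only at level `0`) followed by a path, or with a
peak `U_k D` followed by a descent from height `k - 1` to `0` and a path. Cutting a descent at its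
first passages writes it uniquely as a sequence of `C̄`-paths each followed by `D`, so descents are
counted by `S = 1 / (1 - x C̄)`. The unique decompositions give `S = 1 + x C̄ S`,
`C̄ = 1 + x² S C̄` and `C = 1 + x C + x² S C`; the closed form follows with
`y = 1 + x - x² - 2 x C̄`, whose square is computed from the quadratic equation for `C̄`.
-/

open PowerSeries

/-- A Łukasiewicz path: vertical step components, each `≥ -1`, all partial sums
nonnegative, total sum `0`. -/
def IsLukas (w : List ℤ) : Prop :=
  (∀ s ∈ w, -1 ≤ s) ∧ (∀ k, 0 ≤ (w.take k).sum) ∧ w.sum = 0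

/-- No flat step at positive height: every flat step starts at ordinate `0`. -/
def NoFlatAtPosHeight (w : List ℤ) : Prop :=
  ∀ j : ℕ, w[j]? = some 0 → (w.take j).sum = 0

/-- Every up step is immediately followed by a down step. -/
def UpThenDown (w : List ℤ) : Prop :=
  ∀ j : ℕ, ∀ s : ℤ, w[j]? = some s → 1 ≤ s → w[j + 1]? = some (-1)

namespace Lukasiewicz

section LengthGF

variable {α : Type*}

/- `Set.ncard` is `0` on infinite sets, hence the `HasFiniteSlices` hypotheses below. -/
noncomputable def lengthGF (s : Set (List α)) : PowerSeries ℚ :=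
  PowerSeries.mk fun n => ({w ∈ s | w.length = n}.ncard : ℚ)

def HasFiniteSlices (s : Set (List α)) : Prop := ∀ n, {w ∈ s | w.length = n}.Finite

theorem HasFiniteSlices.mono {s t : Set (List α)} (ht : HasFiniteSlices t) (hst : s ⊆ t) :
    HasFiniteSlices s :=
  fun n => (ht n).subset fun _ hw => ⟨hst hw.1, hw.2⟩

theorem coeff_lengthGF (s : Set (List α)) (n : ℕ) :
    coeff n (lengthGF s) = ({w ∈ s | w.length = n}.ncard : ℚ) :=
  coeff_mk _ _

theorem lengthGF_singleton_nil : lengthGF ({[]} : Set (List α)) = 1 := by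
  ext n
  have hslice : {w ∈ ({[]} : Set (List α)) | w.length = n} = if n = 0 then {[]} else ∅ := by
    ext w
    split_ifs <;> aesop
  rw [coeff_lengthGF, coeff_one, hslice]
  split_ifs <;> simp

theorem lengthGF_union {s t : Set (List α)} (hst : Disjoint s t) (h : HasFiniteSlices (s ∪ t)) :
    lengthGF (s ∪ t) = lengthGF s + lengthGF t := by
  ext n
  have hslice :
      {w ∈ s ∪ t | w.length = n} = {w ∈ s | w.length = n} ∪ {w ∈ t | w.length = n} := by
    ext
    simp [or_and_right]
  rw [map_add, coeff_lengthGF, coeff_lengthGF, coeff_lengthGF, hslice, ← Nat.cast_add,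
    Set.ncard_union_eq (hst.mono (Set.sep_subset _ _) (Set.sep_subset _ _))
      ((h.mono Set.subset_union_left) n) ((h.mono Set.subset_union_right) n)]

open Finset in
theorem ncard_prod_length_add_eq {s t : Set (List α)} (hs : HasFiniteSlices s)
    (ht : HasFiniteSlices t) (n : ℕ) :
    {p ∈ s ×ˢ t | p.1.length + p.2.length = n}.ncard =
      ∑ ij ∈ antidiagonal n,
        {w ∈ s | w.length = ij.1}.ncard * {w ∈ t | w.length = ij.2}.ncard := by
  classical
  have hbiUnion : {p ∈ s ×ˢ t | p.1.length + p.2.length = n} =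
      ↑((antidiagonal n).biUnion fun ij => (hs ij.1).toFinset ×ˢ (ht ij.2).toFinset) := by
    ext ⟨u, v⟩
    simp only [Set.mem_ofPred_eq, Set.mem_prod, Finset.coe_biUnion, Finset.coe_product,
      Set.Finite.coe_toFinset, Finset.mem_coe, HasAntidiagonal.mem_antidiagonal, Set.mem_iUnion,
      exists_prop, Prod.exists]
    grind
  rw [hbiUnion, Set.ncard_coe_finset, Finset.card_biUnion]
  · simp only [Finset.card_product, Set.ncard_eq_toFinset_card _ (hs _),
      Set.ncard_eq_toFinset_card _ (ht _)]
  · intro ij _ ij' _ hne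
    simp only [Function.onFun, Finset.disjoint_left, Finset.mem_product, Set.Finite.mem_toFinset]
    rintro ⟨u, v⟩ ⟨⟨-, hu⟩, ⟨-, hv⟩⟩ ⟨⟨-, hu'⟩, ⟨-, hv'⟩⟩
    exact hne (Prod.ext (hu.symm.trans hu') (hv.symm.trans hv'))

theorem lengthGF_image2 {s t : Set (List α)} (g : List α → List α → List α) (c : ℕ)
    (hg : ∀ u ∈ s, ∀ v ∈ t, (g u v).length = u.length + v.length + c)
    (hinj : Set.InjOn (Function.uncurry g) (s ×ˢ t)) (hs : HasFiniteSlices s)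
    (ht : HasFiniteSlices t) :
    lengthGF (Set.image2 g s t) = X ^ c * (lengthGF s * lengthGF t) := by
  ext n
  have hslice : {w ∈ Set.image2 g s t | w.length = n} =
      Function.uncurry g '' {p ∈ s ×ˢ t | p.1.length + p.2.length + c = n} := by
    ext w
    constructor
    · rintro ⟨⟨u, hu, v, hv, rfl⟩, hn⟩
      exact ⟨(u, v), ⟨⟨hu, hv⟩, hg u hu v hv ▸ hn⟩, rfl⟩
    · rintro ⟨⟨u, v⟩, ⟨⟨hu, hv⟩, hn⟩, rfl⟩
      exact ⟨⟨u, hu, v, hv, rfl⟩, (hg u hu v hv).trans hn⟩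
  rw [coeff_X_pow_mul', coeff_lengthGF, hslice, (hinj.mono (Set.sep_subset _ _)).ncard_image]
  split_ifs with hcn
  · obtain ⟨m, rfl⟩ := Nat.exists_eq_add_of_le' hcn
    simp only [Nat.add_right_cancel_iff, Nat.add_sub_cancel, coeff_mul, coeff_lengthGF]
    rw [ncard_prod_length_add_eq hs ht]
    push_cast
    rfl
  · have : {p ∈ s ×ˢ t | p.1.length + p.2.length + c = n} = ∅ :=
      Set.eq_empty_of_forall_notMem fun p hp => hcn (hp.2 ▸ Nat.le_add_left _ _)
    rw [this]
    simp

theorem lengthGF_image {t : Set (List α)} (f : List α → List α) (c : ℕ)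
    (hf : ∀ v ∈ t, (f v).length = v.length + c) (hinj : Set.InjOn f t) (ht : HasFiniteSlices t) :
    lengthGF (f '' t) = X ^ c * lengthGF t := by
  have hnil : HasFiniteSlices ({[]} : Set (List α)) := fun _ => (Set.finite_singleton _).subset
    (Set.sep_subset _ _)
  rw [← Set.image2_singleton_left (f := fun _ => f),
    lengthGF_image2 _ c (by simpa using hf) ?_ hnil ht, lengthGF_singleton_nil, one_mul]
  rintro ⟨_, v⟩ ⟨rfl, hv⟩ ⟨_, v'⟩ ⟨rfl, hv'⟩ h
  exact Prod.ext rfl (hinj hv hv' h)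

end LengthGF

/- Levels are measured from the starting point of a path: for a path started at height `h`,
the ground is at level `-h`. -/
def PrefixSumsGe (c : ℤ) (w : List ℤ) : Prop := ∀ k, c ≤ (w.take k).sum

def FlatsAtLevel (c : ℤ) (w : List ℤ) : Prop := ∀ j, w[j]? = some 0 → (w.take j).sum = c

variable {c x : ℤ} {u v w : List ℤ}

theorem PrefixSumsGe.nonpos (h : PrefixSumsGe c w) : c ≤ 0 := by simpa using h 0

theorem prefixSumsGe_nil : PrefixSumsGe c [] ↔ c ≤ 0 := by simp [PrefixSumsGe]

theorem prefixSumsGe_cons : PrefixSumsGe c (x :: w) ↔ c ≤ 0 ∧ PrefixSumsGe (c - x) w := by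
  refine ⟨fun h => ⟨h.nonpos, fun k => ?_⟩, fun ⟨hc, h⟩ k => ?_⟩
  · have := h (k + 1)
    simp only [List.take_succ_cons, List.sum_cons] at this
    linarith
  · rcases k with _ | k
    · simpa using hc
    · simp only [List.take_succ_cons, List.sum_cons]
      linarith [h k]

theorem prefixSumsGe_append :
    PrefixSumsGe c (u ++ v) ↔ PrefixSumsGe c u ∧ PrefixSumsGe (c - u.sum) v := by
  induction u generalizing c with
  | nil => simpa [prefixSumsGe_nil] using fun h => h.nonpos
  | cons x u ih => simp only [List.cons_append, prefixSumsGe_cons, ih, List.sum_cons, sub_sub,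
      and_assoc]

theorem PrefixSumsGe.getLast?_nonpos (h : PrefixSumsGe w.sum w) : ∀ x ∈ w.getLast?, x ≤ 0 := by
  intro x hx
  obtain ⟨u, rfl⟩ := List.getLast?_eq_some_iff.mp hx
  simpa using (prefixSumsGe_append.mp h).2.nonpos

theorem PrefixSumsGe.le_length (hw : ∀ y ∈ w, -1 ≤ y) (h : PrefixSumsGe w.sum w) (hx : x ∈ w) :
    x ≤ w.length := by
  obtain ⟨a, b, rfl⟩ := List.append_of_mem hx
  have hxb : x + b.sum ≤ 0 := by simpa using (prefixSumsGe_append.mp h).2.nonpos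
  have hb : b.length • (-1 : ℤ) ≤ b.sum :=
    List.card_nsmul_le_sum _ _ fun y hy => hw y (by simp [hy])
  simp only [nsmul_eq_mul, mul_neg, mul_one, List.length_append, List.length_cons] at hb ⊢
  push_cast
  linarith

theorem flatsAtLevel_of_zero_notMem (h : (0 : ℤ) ∉ w) : FlatsAtLevel c w :=
  fun _ hj => absurd (List.mem_of_getElem? hj) h

theorem FlatsAtLevel.zero_notMem {c' : ℤ} (hf : FlatsAtLevel c w) (hp : PrefixSumsGe c' w)
    (hc : c < c') : (0 : ℤ) ∉ w := fun h0 => by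
  obtain ⟨j, hj⟩ := List.mem_iff_getElem?.mp h0
  linarith [hf j hj, hp j]

theorem flatsAtLevel_cons : FlatsAtLevel c (x :: w) ↔ (x = 0 → c = 0) ∧ FlatsAtLevel (c - x) w := by
  refine ⟨fun h => ⟨fun hx => ?_, fun j hj => ?_⟩, fun ⟨hc, h⟩ j hj => ?_⟩
  · simpa using (h 0 (by simp [hx])).symm
  · have := h (j + 1) (by simpa using hj)
    simp only [List.take_succ_cons, List.sum_cons] at this
    linarith
  · rcases j with _ | j
    · simpa using (hc (by simpa using hj)).symm
    · simp only [List.take_succ_cons, List.sum_cons]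
      linarith [h j (by simpa using hj)]

theorem flatsAtLevel_append :
    FlatsAtLevel c (u ++ v) ↔ FlatsAtLevel c u ∧ FlatsAtLevel (c - u.sum) v := by
  induction u generalizing c with
  | nil => simpa using fun _ => flatsAtLevel_of_zero_notMem List.not_mem_nil
  | cons x u ih => simp only [List.cons_append, flatsAtLevel_cons, ih, List.sum_cons, sub_sub,
      and_assoc]

theorem upThenDown_nil : UpThenDown [] := fun _ _ h => by simp at h

theorem upThenDown_cons :
    UpThenDown (x :: w) ↔ (1 ≤ x → w[0]? = some (-1)) ∧ UpThenDown w := by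
  refine ⟨fun h => ⟨fun hx => by simpa using h 0 x rfl hx, fun j s hj hs => ?_⟩,
    fun ⟨hx, h⟩ j s hj hs => ?_⟩
  · simpa using h (j + 1) s (by simpa using hj) hs
  · rcases j with _ | j
    · simp only [List.getElem?_cons_zero, Option.some.injEq] at hj
      subst hj
      simpa using hx hs
    · simpa using h j s (by simpa using hj) hs

theorem upThenDown_append (hu : ∀ x ∈ u.getLast?, x ≤ 0) :
    UpThenDown (u ++ v) ↔ UpThenDown u ∧ UpThenDown v := by
  induction u with
  | nil => simp [upThenDown_nil]
  | cons x u ih =>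
    rcases u with _ | ⟨y, u⟩
    · have : ¬ 1 ≤ x := by simp at hu; omega
      simp [upThenDown_cons, upThenDown_nil, this]
    · simp only [List.getLast?_cons_cons] at hu
      rw [List.cons_append, upThenDown_cons, upThenDown_cons, ih hu]
      simp only [List.cons_append, List.getElem?_cons_zero]
      tauto

def IsPath (c : ℤ) (w : List ℤ) : Prop :=
  (∀ x ∈ w, -1 ≤ x) ∧ PrefixSumsGe c w ∧ FlatsAtLevel c w ∧ UpThenDown w

theorem isPath_nil : IsPath c [] ↔ c ≤ 0 := by
  simp [IsPath, prefixSumsGe_nil, flatsAtLevel_of_zero_notMem, upThenDown_nil]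

theorem isPath_cons : IsPath c (x :: w) ↔
    -1 ≤ x ∧ c ≤ 0 ∧ (x = 0 → c = 0) ∧ (1 ≤ x → w[0]? = some (-1)) ∧ IsPath (c - x) w := by
  simp only [IsPath, List.forall_mem_cons, prefixSumsGe_cons, flatsAtLevel_cons, upThenDown_cons]
  tauto

theorem isPath_append (hu : ∀ x ∈ u.getLast?, x ≤ 0) :
    IsPath c (u ++ v) ↔ IsPath c u ∧ IsPath (c - u.sum) v := by
  simp only [IsPath, List.forall_mem_append, prefixSumsGe_append, flatsAtLevel_append,
    upThenDown_append hu]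
  tauto

theorem isPath_iff_of_zero_notMem (h : (0 : ℤ) ∉ w) :
    IsPath c w ↔ (∀ x ∈ w, -1 ≤ x) ∧ PrefixSumsGe c w ∧ UpThenDown w := by
  simp [IsPath, flatsAtLevel_of_zero_notMem h]

def IsCPath (w : List ℤ) : Prop := IsPath 0 w ∧ w.sum = 0

def IsCbPath (w : List ℤ) : Prop := IsCPath w ∧ (0 : ℤ) ∉ w

theorem isCPath_iff : IsCPath w ↔ IsLukas w ∧ NoFlatAtPosHeight w ∧ UpThenDown w := by
  simp only [IsCPath, IsPath, IsLukas, NoFlatAtPosHeight, PrefixSumsGe, FlatsAtLevel]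
  tauto

theorem isCPath_nil : IsCPath [] := ⟨isPath_nil.mpr le_rfl, rfl⟩

theorem isCPath_zero_cons : IsCPath (0 :: w) ↔ IsCPath w := by
  simp [IsCPath, isPath_cons]

theorem IsCPath.prefixSumsGe (h : IsCPath w) : PrefixSumsGe w.sum w := h.2 ▸ h.1.2.1

theorem IsCPath.head_nonneg (h : IsCPath (x :: w)) : 0 ≤ x := by
  obtain ⟨-, -, -, -, -, hw, -⟩ := isPath_cons.mp h.1
  linarith [hw.nonpos]

def IsFirstPassage (p : List ℤ) : Prop := ∀ k < p.length, p.sum < (p.take k).sum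

theorem IsFirstPassage.prefixSumsGe (h : IsFirstPassage w) : PrefixSumsGe w.sum w := fun k =>
  (lt_or_ge k w.length).elim (fun hk => (h k hk).le) fun hk => by rw [List.take_of_length_le hk]

theorem IsFirstPassage.append (hu : IsFirstPassage u) (hv : IsFirstPassage v) :
    IsFirstPassage (u ++ v) := by
  intro k hk
  rw [List.sum_append]
  rcases lt_or_ge k u.length with hku | hku
  · rw [List.take_append_of_le_length hku.le]
    linarith [hu k hku, hv.prefixSumsGe.nonpos]
  · obtain ⟨r, rfl⟩ := Nat.exists_eq_add_of_le hku
    rw [List.take_length_add_append, List.sum_append]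
    simp only [List.length_append, Nat.add_lt_add_iff_left] at hk
    linarith [hv r hk]

theorem PrefixSumsGe.isFirstPassage_append_neg_one (h : PrefixSumsGe u.sum u) :
    IsFirstPassage (u ++ [-1]) := by
  intro k hk
  simp only [List.length_append, List.length_singleton] at hk
  rw [List.take_append_of_le_length (by omega), List.sum_append]
  simp only [List.sum_singleton]
  linarith [h k]

theorem IsFirstPassage.append_inj {u' v' : List ℤ} (hu : IsFirstPassage u)
    (hu' : IsFirstPassage u') (hs : u.sum = u'.sum) (h : u ++ v = u' ++ v') : u = u' ∧ v = v' := by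
  have length_le : ∀ {u u' v v' : List ℤ}, IsFirstPassage u' → u.sum = u'.sum →
      u ++ v = u' ++ v' → u'.length ≤ u.length := fun {u u' v v'} hu' hs h => by
    by_contra! hlt
    have := hu' u.length hlt
    rw [← List.take_append_of_le_length (l₂ := v') hlt.le, ← h, List.take_left] at this
    exact this.ne' hs
  exact List.append_inj h (le_antisymm (length_le hu hs.symm h.symm) (length_le hu' hs h))

theorem exists_eq_append_neg_one_cons (hw : ∀ x ∈ w, -1 ≤ x) (hc : c ≤ 0) (hs : w.sum < c) :
    ∃ u v, w = u ++ -1 :: v ∧ PrefixSumsGe c u ∧ u.sum = c := by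
  induction w generalizing c with
  | nil => simp at hs; omega
  | cons x w ih =>
    rw [List.forall_mem_cons] at hw
    by_cases hstop : c = 0 ∧ x = -1
    · exact ⟨[], w, by simp [hstop.2], prefixSumsGe_nil.mpr hc, by simp [hstop.1]⟩
    · obtain ⟨u, v, rfl, hu, hus⟩ := ih hw.2 (c := c - x) (by omega) (by simp at hs; linarith)
      exact ⟨x :: u, v, rfl, prefixSumsGe_cons.mpr ⟨hc, hu⟩, by simp [hus]⟩

/-- In the paper's decomposition `U_k L₁ D L₂ D ⋯ L_k D L'` of a path, `L₁` is empty because of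
`UpThenDown`, and `L₂ D ⋯ L_k D` is a descent: a sequence of `C̄`-paths, each followed by `D`. -/
inductive IsDescent : List ℤ → Prop
  | nil : IsDescent []
  | cons {u v : List ℤ} : IsCbPath u → IsDescent v → IsDescent (u ++ -1 :: v)

namespace IsDescent

variable {m : List ℤ}

theorem neg_one_le (h : IsDescent m) : ∀ x ∈ m, -1 ≤ x := by
  induction h with
  | nil => simp
  | cons hu _ ih =>
    obtain ⟨⟨⟨hstep, -⟩, -⟩, -⟩ := hu
    simp only [List.forall_mem_append, List.forall_mem_cons]
    exact ⟨hstep, le_rfl, ih⟩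

theorem zero_notMem (h : IsDescent m) : (0 : ℤ) ∉ m := by
  induction h with
  | nil => simp
  | cons hu _ ih => simpa using ⟨hu.2, ih⟩

theorem isFirstPassage (h : IsDescent m) : IsFirstPassage m := by
  induction h with
  | nil => simp [IsFirstPassage]
  | cons hu _ ih =>
    rw [← List.singleton_append, ← List.append_assoc]
    exact hu.1.prefixSumsGe.isFirstPassage_append_neg_one.append ih

theorem upThenDown (h : IsDescent m) : UpThenDown m := by
  induction h with
  | nil => exact upThenDown_nil
  | cons hu _ ih =>
    obtain ⟨hu, -⟩ := hu
    rw [upThenDown_append hu.prefixSumsGe.getLast?_nonpos, upThenDown_cons]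
    exact ⟨hu.1.2.2.2, by omega, ih⟩

theorem isPath (h : IsDescent m) : IsPath m.sum m :=
  (isPath_iff_of_zero_notMem h.zero_notMem).mpr
    ⟨h.neg_one_le, h.isFirstPassage.prefixSumsGe, h.upThenDown⟩

end IsDescent

theorem exists_isDescent_append (n : ℕ) (hw : IsPath (-n) w) (hs : w.sum = -n) :
    ∃ m L, IsDescent m ∧ IsCPath L ∧ m.sum = -n ∧ w = m ++ L := by
  induction n generalizing w with
  | zero => exact ⟨[], w, .nil, by simpa using ⟨hw, hs⟩, by simp, rfl⟩
  | succ n ih =>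
    obtain ⟨u, v, rfl, hu, hus⟩ := exists_eq_append_neg_one_cons hw.1 le_rfl (by omega)
    obtain ⟨⟨hstep, -, hflat, hutd⟩, hwv⟩ := (isPath_append (hus ▸ hu).getLast?_nonpos).mp hw
    have hu0 : (0 : ℤ) ∉ u := hflat.zero_notMem hu (by omega)
    obtain ⟨-, -, -, -, hv⟩ := isPath_cons.mp hwv
    obtain ⟨m, L, hm, hL, hms, rfl⟩ :=
      ih (by convert hv using 1; push_cast; omega) (by simp at hs; omega)
    have hu : IsCbPath u :=
      ⟨⟨(isPath_iff_of_zero_notMem hu0).mpr ⟨hstep, hu, hutd⟩, hus⟩, hu0⟩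
    exact ⟨u ++ -1 :: m, L, .cons hu hm, hL, by simp [hus, hms], by simp⟩

/-- The path `U_k D m L`; the height `k = 1 - m.sum` of the peak is the one after which `D m`
returns to level `0`. -/
def peakCons (m L : List ℤ) : List ℤ := (1 - m.sum) :: -1 :: (m ++ L)

theorem isCPath_peakCons {m L : List ℤ} (hm : IsDescent m) :
    IsCPath (peakCons m L) ↔ IsCPath L := by
  have hm0 := hm.isFirstPassage.prefixSumsGe.nonpos
  have hlevel : (0 : ℤ) - (1 - m.sum) - -1 = m.sum := by ring
  have hsum : 1 - m.sum + (-1 + (m.sum + L.sum)) = L.sum := by ring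
  simp only [IsCPath, peakCons, isPath_cons, List.sum_cons, List.sum_append,
    isPath_append hm.isFirstPassage.prefixSumsGe.getLast?_nonpos, hlevel, sub_self, hm.isPath, hsum]
  simp only [List.getElem?_cons_zero, implies_true, true_and, le_refl]
  exact and_congr_left' ⟨fun h => h.2.2.2.2, fun hL => ⟨by omega, by omega, by omega, by omega, hL⟩⟩

theorem IsCPath.exists_eq_peakCons {k : ℤ} (hw : IsCPath (k :: w)) (hk : 1 ≤ k) :
    ∃ m L, IsDescent m ∧ IsCPath L ∧ k :: w = peakCons m L := by
  obtain ⟨hp, hs⟩ := hw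
  obtain ⟨-, -, -, hhead, hp⟩ := isPath_cons.mp hp
  obtain ⟨w, rfl⟩ : ∃ w', w = -1 :: w' := by
    rcases w with _ | ⟨y, w⟩
    · simpa using hhead hk
    · exact ⟨w, by simpa using hhead hk⟩
  obtain ⟨-, -, -, -, hp⟩ := isPath_cons.mp hp
  obtain ⟨n, hn⟩ : ∃ n : ℕ, k - 1 = n := ⟨(k - 1).toNat, by omega⟩
  obtain ⟨m, L, hm, hL, hms, rfl⟩ :=
    exists_isDescent_append n (by convert hp using 1; omega) (by simp at hs; omega)
  exact ⟨m, L, hm, hL, by simp [peakCons, hms]; omega⟩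

theorem hasFiniteSlices_of_prefixSumsGe {s : Set (List ℤ)}
    (h : ∀ w ∈ s, (∀ x ∈ w, -1 ≤ x) ∧ PrefixSumsGe w.sum w) : HasFiniteSlices s := by
  intro n
  refine ((List.finite_length_eq (Set.Icc (-1 : ℤ) n) n).image (List.map Subtype.val)).subset ?_
  rintro w ⟨hw, rfl⟩
  have hmem : ∀ x ∈ w, x ∈ Set.Icc (-1 : ℤ) w.length := fun x hx =>
    ⟨(h w hw).1 x hx, (h w hw).2.le_length (h w hw).1 hx⟩
  exact ⟨w.attach.map fun x => ⟨x.1, hmem x.1 x.2⟩, by simp, by simp⟩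

theorem hasFiniteSlices_isCPath : HasFiniteSlices {w | IsCPath w} :=
  hasFiniteSlices_of_prefixSumsGe fun _ hw => ⟨hw.1.1, hw.prefixSumsGe⟩

theorem hasFiniteSlices_isCbPath : HasFiniteSlices {w | IsCbPath w} :=
  hasFiniteSlices_isCPath.mono fun _ hw => hw.1

theorem hasFiniteSlices_isDescent : HasFiniteSlices {m | IsDescent m} :=
  hasFiniteSlices_of_prefixSumsGe fun _ hm => ⟨hm.neg_one_le, hm.isFirstPassage.prefixSumsGe⟩

theorem setOf_isDescent : {m | IsDescent m} =
    {[]} ∪ Set.image2 (fun u v => u ++ -1 :: v) {u | IsCbPath u} {m | IsDescent m} := by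
  ext m
  constructor
  · rintro (_ | ⟨hu, hv⟩)
    · exact Or.inl rfl
    · exact Or.inr ⟨_, hu, _, hv, rfl⟩
  · rintro (rfl | ⟨u, hu, v, hv, rfl⟩)
    · exact .nil
    · exact .cons hu hv

theorem setOf_isCbPath : {w | IsCbPath w} =
    {[]} ∪ Set.image2 peakCons {m | IsDescent m} {w | IsCbPath w} := by
  ext w
  constructor
  · rintro ⟨hw, h0⟩
    rcases w with _ | ⟨x, w⟩
    · exact Or.inl rfl
    · have hx : 1 ≤ x := by
        have := hw.head_nonneg
        have : x ≠ 0 := fun hx => h0 (by simp [hx])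
        omega
      obtain ⟨m, L, hm, hL, he⟩ := hw.exists_eq_peakCons hx
      exact Or.inr ⟨m, hm, L, ⟨hL, fun h => h0 (by simp [he, peakCons, h])⟩, he.symm⟩
  · rintro (rfl | ⟨m, hm, L, ⟨hL, h0⟩, rfl⟩)
    · exact ⟨isCPath_nil, List.not_mem_nil⟩
    · refine ⟨(isCPath_peakCons hm).mpr hL, ?_⟩
      have := hm.isFirstPassage.prefixSumsGe.nonpos
      simp only [peakCons, List.mem_cons, List.mem_append, not_or]
      exact ⟨by omega, by omega, hm.zero_notMem, h0⟩

theorem setOf_isCPath : {w | IsCPath w} = {[]} ∪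
    (List.cons 0 '' {w | IsCPath w} ∪ Set.image2 peakCons {m | IsDescent m} {w | IsCPath w}) := by
  ext w
  constructor
  · intro hw
    rcases w with _ | ⟨x, w⟩
    · exact Or.inl rfl
    · rcases hw.head_nonneg.eq_or_lt with rfl | hx
      · exact Or.inr (Or.inl ⟨w, isCPath_zero_cons.mp hw, rfl⟩)
      · obtain ⟨m, L, hm, hL, he⟩ := hw.exists_eq_peakCons hx
        exact Or.inr (Or.inr ⟨m, hm, L, hL, he.symm⟩)
  · rintro (rfl | ⟨w, hw, rfl⟩ | ⟨m, hm, L, hL, rfl⟩)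
    · exact isCPath_nil
    · exact isCPath_zero_cons.mpr hw
    · exact (isCPath_peakCons hm).mpr hL

theorem injOn_append_neg_one_cons {t : Set (List ℤ)} :
    Set.InjOn (Function.uncurry fun u v => u ++ -1 :: v) ({u | IsCbPath u} ×ˢ t) := by
  rintro ⟨u, v⟩ ⟨hu, -⟩ ⟨u', v'⟩ ⟨hu', -⟩ h
  have h' : (u ++ [-1]) ++ v = (u' ++ [-1]) ++ v' := by simpa using h
  obtain ⟨hu, hv⟩ := hu.1.prefixSumsGe.isFirstPassage_append_neg_one.append_inj
    hu'.1.prefixSumsGe.isFirstPassage_append_neg_one (by simp [hu.1.2, hu'.1.2]) h'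
  exact Prod.ext (List.append_cancel_right hu) hv

theorem injOn_peakCons {t : Set (List ℤ)} :
    Set.InjOn (Function.uncurry peakCons) ({m | IsDescent m} ×ˢ t) := by
  rintro ⟨m, L⟩ ⟨hm, -⟩ ⟨m', L'⟩ ⟨hm', -⟩ h
  simp only [Function.uncurry_apply_pair, peakCons, List.cons.injEq, sub_right_inj, true_and] at h
  obtain ⟨hm, hL⟩ := hm.isFirstPassage.append_inj hm'.isFirstPassage h.1 h.2
  exact Prod.ext hm hL

theorem lengthGF_isDescent : lengthGF {m | IsDescent m} =
    1 + X * (lengthGF {u | IsCbPath u} * lengthGF {m | IsDescent m}) := by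
  have hfin := hasFiniteSlices_isDescent
  rw [setOf_isDescent] at hfin
  conv_lhs => rw [setOf_isDescent]
  rw [lengthGF_union (Set.disjoint_singleton_left.mpr (by simp)) hfin, lengthGF_singleton_nil,
    lengthGF_image2 _ 1 (fun _ _ _ _ => by simp; omega) injOn_append_neg_one_cons
      hasFiniteSlices_isCbPath hasFiniteSlices_isDescent, pow_one]

theorem lengthGF_isCbPath : lengthGF {w | IsCbPath w} =
    1 + X ^ 2 * (lengthGF {m | IsDescent m} * lengthGF {w | IsCbPath w}) := by
  have hfin := hasFiniteSlices_isCbPath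
  rw [setOf_isCbPath] at hfin
  conv_lhs => rw [setOf_isCbPath]
  rw [lengthGF_union (Set.disjoint_singleton_left.mpr (by simp [peakCons])) hfin,
    lengthGF_singleton_nil, lengthGF_image2 _ 2 (fun _ _ _ _ => by simp [peakCons]) injOn_peakCons
      hasFiniteSlices_isDescent hasFiniteSlices_isCbPath]

theorem lengthGF_isCPath : lengthGF {w | IsCPath w} = 1 + (X * lengthGF {w | IsCPath w} +
    X ^ 2 * (lengthGF {m | IsDescent m} * lengthGF {w | IsCPath w})) := by
  have hfin := hasFiniteSlices_isCPath
  rw [setOf_isCPath] at hfin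
  have hdisj : Disjoint (List.cons 0 '' {w | IsCPath w})
      (Set.image2 peakCons {m | IsDescent m} {w | IsCPath w}) := by
    refine Set.disjoint_left.mpr ?_
    rintro _ ⟨w, -, rfl⟩ ⟨m, hm, L, -, h⟩
    have := hm.isFirstPassage.prefixSumsGe.nonpos
    simp only [peakCons, List.cons.injEq] at h
    omega
  conv_lhs => rw [setOf_isCPath]
  rw [lengthGF_union (Set.disjoint_singleton_left.mpr (by simp [peakCons])) hfin,
    lengthGF_union hdisj (hfin.mono Set.subset_union_right), lengthGF_singleton_nil,
    lengthGF_image _ 1 (fun _ _ => rfl) (List.cons_injective.injOn) hasFiniteSlices_isCPath,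
    lengthGF_image2 _ 2 (fun _ _ _ _ => by simp [peakCons]) injOn_peakCons
      hasFiniteSlices_isDescent hasFiniteSlices_isCPath, pow_one]

end Lukasiewicz

open Lukasiewicz in
/-- The counting generating functions `C` (Łukasiewicz paths with no flat at
positive height and every up step followed by a down step) and `C̄` (the same
paths without any flat step) satisfy, as formal power series,
`C = 1 + x C + x² C / (1 - x C̄)` and `C̄ = 1 + x Σ_{k≥1} x^k C̄^k`
(both stated multiplied through by the unit `1 - x C̄`), and `C` is given by the
closed form `C = (1 - x + x² + y) / (1 - 2x - x³ + (1-x) y)` where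
`y = √(1 - 2x - x² - 2x³ + x⁴)` is the power series with `y² = 1 - 2x - x² - 2x³ + x⁴`
and constant coefficient `1` (stated multiplied through by the denominator). -/
theorem genfun_C :
    ∃ C Cb y : PowerSeries ℚ,
      (∀ n : ℕ, (PowerSeries.coeff n) C =
        Set.ncard {w : List ℤ | IsLukas w ∧ NoFlatAtPosHeight w ∧
          UpThenDown w ∧ w.length = n}) ∧
      (∀ n : ℕ, (PowerSeries.coeff n) Cb =
        Set.ncard {w : List ℤ | IsLukas w ∧ NoFlatAtPosHeight w ∧
          UpThenDown w ∧ (0 : ℤ) ∉ w ∧ w.length = n}) ∧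
      C * (1 - X * Cb) = (1 + X * C) * (1 - X * Cb) + X ^ 2 * C ∧
      Cb * (1 - X * Cb) = (1 - X * Cb) + X ^ 2 * Cb ∧
      y ^ 2 = 1 - 2 * X - X ^ 2 - 2 * X ^ 3 + X ^ 4 ∧
      PowerSeries.constantCoeff y = 1 ∧
      C * (1 - 2 * X - X ^ 3 + (1 - X) * y) = 1 - X + X ^ 2 + y := by
  set C := lengthGF {w | IsCPath w}
  set Cb := lengthGF {w | IsCbPath w}
  set S := lengthGF {m | IsDescent m}
  have hS : S * (1 - X * Cb) = 1 := by linear_combination lengthGF_isDescent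
  have hC : C = 1 + (X * C + X ^ 2 * (S * C)) := lengthGF_isCPath
  have hCb : Cb * (1 - X * Cb) = (1 - X * Cb) + X ^ 2 * Cb := by
    linear_combination (1 - X * Cb) * lengthGF_isCbPath + X ^ 2 * Cb * hS
  refine ⟨C, Cb, 1 + X - X ^ 2 - 2 * X * Cb, fun n => ?_, fun n => ?_,
    by linear_combination (1 - X * Cb) * hC + X ^ 2 * C * hS, hCb,
    by linear_combination (-4 * X) * hCb, by simp,
    by linear_combination (2 - 2 * X * Cb) * hC + 2 * X ^ 2 * C * hS⟩
  · simp only [C, coeff_lengthGF, Set.sep_ofPred, isCPath_iff, and_assoc]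
  · simp only [Cb, coeff_lengthGF, Set.sep_ofPred, IsCbPath, isCPath_iff, and_assoc]
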